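/- Suppose f ∈ H satisfies P₁f = f (in the Gibbs-sampler interpretation, f is a function of the first component only, as in data augmentation). Then for every r ∈ (0,1): V_D(f) ≤ max{2r/(2−r), 2r(1−r)}·V_R(f,r), and consequently, for every τ > 0, V_D†(f) ≤ ((τ+1)/τ)·V_R†(f,r). -/

import Mathlib

open scoped RealInnerProductSpace

noncomputable def VD {H : Type*} [NormedAddCommGroup H] [InnerProductSpace ℝ H]
    (P₁ P₂ : H →L[ℝ] H) (f : H) : ℝ :=
  ‖f‖ ^ 2
    + ∑' s : ℕ, ⟪f, ((P₁ * P₂) ^ s * P₁) f⟫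
    + ∑' s : ℕ, ⟪f, ((P₁ * P₂) ^ (s + 1)) f⟫
    + ∑' s : ℕ, ⟪f, ((P₂ * P₁) ^ s * P₂) f⟫
    + ∑' s : ℕ, ⟪f, ((P₂ * P₁) ^ (s + 1)) f⟫

noncomputable def VR {H : Type*} [NormedAddCommGroup H] [InnerProductSpace ℝ H]
    (P₁ P₂ : H →L[ℝ] H) (r : ℝ) (f : H) : ℝ :=
  ‖f‖ ^ 2 + 2 * ∑' t : ℕ, ⟪f, (((1 - r) • P₁ + r • P₂) ^ (t + 1)) f⟫

noncomputable def kOne (r : ℝ) : ℝ :=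
  1 - r + r ^ 2 + Real.sqrt (r ^ 2 * (1 - r) ^ 2 + (1 - 2 * r) ^ 2)

noncomputable def kTwo (r : ℝ) : ℝ :=
  (1 - r + r ^ 2 + Real.sqrt (r ^ 2 * (1 - r) ^ 2 + (1 - 2 * r) ^ 2)) / (2 * r * (1 - r))

noncomputable def kappa (τ r : ℝ) : ℝ := (τ + 1) / (2 * (r * τ + 1 - r))

noncomputable def VDdag {H : Type*} [NormedAddCommGroup H] [InnerProductSpace ℝ H]
    (P₁ P₂ : H →L[ℝ] H) (τ : ℝ) (f : H) : ℝ := ((1 + τ) / 2) * VD P₁ P₂ f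

noncomputable def VRdag {H : Type*} [NormedAddCommGroup H] [InnerProductSpace ℝ H]
    (P₁ P₂ : H →L[ℝ] H) (r τ : ℝ) (f : H) : ℝ := (r * τ + 1 - r) * VR P₁ P₂ r f

/-!
Put `T = P₁ P₂ P₁`, a positive operator with `‖T‖ < 1`, and `g = (1 - T)⁻¹ f`. Since `P₁ f = f`,
every term of `V_D(f)` is some `⟪f, Tˢ f⟫`, so `V_D(f) = 4 ⟪f, g⟫ - 2 ‖f‖²`. The random-scan
operator `A = (1 - r) P₁ + r P₂` is a positive contraction and `h = g / r + P₂ g / (1 - r)`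
solves `(1 - A) h = f`; the partial sums of `∑ ⟪f, Aᵗ f⟫` telescope to `⟪f, h⟫ - ⟪f, Aⁿ h⟫`, and
the remainder tends to zero by Cauchy–Schwarz for `Aⁿ`. This gives `V_R(f, r)` in closed form in
terms of `‖f‖² ≤ ⟪f, g⟫`, and both claims become inequalities between real numbers.
-/

open Filter Topology Finset

namespace ContinuousLinearMap

section Positive

variable {𝕜 E : Type*} [RCLike 𝕜] [NormedAddCommGroup E] [InnerProductSpace 𝕜 E]

theorem IsPositive.pow [CompleteSpace E] {T : E →L[𝕜] E} (hT : T.IsPositive) (n : ℕ) :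
    (T ^ n).IsPositive := by
  induction n using Nat.twoStepInduction with
  | zero => rw [pow_zero]; exact isPositive_one
  | one => rwa [pow_one]
  | more n ih _ =>
    have h := ih.conj_adjoint T
    rwa [hT.isSelfAdjoint.adjoint_eq, ← mul_def, ← mul_def, ← mul_assoc, ← pow_succ',
      ← pow_succ] at h

theorem IsPositive.conj_isSelfAdjoint [CompleteSpace E] {p q : E →L[𝕜] E}
    (hq : q.IsPositive) (hp : IsSelfAdjoint p) : (p * q * p).IsPositive := by
  have h := hq.conj_adjoint p
  rwa [hp.adjoint_eq, ← mul_def, ← mul_def, ← mul_assoc] at h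

theorem norm_pow_apply_le_of_norm_le_one {T : E →L[𝕜] E} (hT : ‖T‖ ≤ 1) (n : ℕ) (x : E) :
    ‖(T ^ n) x‖ ≤ ‖x‖ := by
  induction n with
  | zero => simp
  | succ n ih =>
    rw [pow_succ', mul_apply_eq_comp]
    exact (T.le_of_opNorm_le hT _).trans (by rwa [one_mul])

end Positive

section Real

variable {E : Type*} [NormedAddCommGroup E] [InnerProductSpace ℝ E]

theorem IsPositive.real_inner_map_sq_le {T : E →L[ℝ] E} (hT : T.IsPositive) (x y : E) :
    ⟪x, T y⟫ ^ 2 ≤ ⟪x, T x⟫ * ⟪y, T y⟫ := by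
  have hsymm : ⟪y, T x⟫ = ⟪x, T y⟫ := by
    rw [← hT.inner_left_eq_inner_right, real_inner_comm]
  have hquad : ∀ t : ℝ, 0 ≤ ⟪y, T y⟫ * (t * t) + 2 * ⟪x, T y⟫ * t + ⟪x, T x⟫ := fun t => by
    have := hT.inner_nonneg_right (x + t • y)
    simp only [map_add, map_smul, inner_add_left, inner_add_right, real_inner_smul_left,
      real_inner_smul_right, hsymm] at this
    linarith
  have := discrim_le_zero hquad
  rw [discrim] at this
  nlinarith

theorem IsPositive.hasSum_inner_pow [CompleteSpace E] {A : E →L[ℝ] E} (hA : A.IsPositive)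
    (hA₁ : ‖A‖ ≤ 1) {f h : E} (hf : h - A h = f) :
    HasSum (fun t => ⟪f, (A ^ t) f⟫) ⟪f, h⟫ := by
  set u : ℕ → ℝ := fun t => ⟪f, (A ^ t) f⟫
  have hu : ∀ t, 0 ≤ u t := fun t => (hA.pow t).inner_nonneg_right f
  have hpartial : ∀ n, ∑ t ∈ range n, u t = ⟪f, h⟫ - ⟪f, (A ^ n) h⟫ := fun n => by
    have hstep : ∀ t, (A ^ t) f = (A ^ t) h - (A ^ (t + 1)) h := fun t => by
      rw [← hf, map_sub, pow_succ, mul_apply_eq_comp]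
    simp only [u, hstep, inner_sub_right]
    rw [sum_range_sub' (fun t => ⟪f, (A ^ t) h⟫), pow_zero, one_apply_eq_self]
  have hbound : ∀ n, |⟪f, (A ^ n) h⟫| ≤ ‖f‖ * ‖h‖ := fun n =>
    (abs_real_inner_le_norm _ _).trans
      (mul_le_mul_of_nonneg_left (norm_pow_apply_le_of_norm_le_one hA₁ n h) (norm_nonneg f))
  have hsum : Summable u := summable_of_sum_range_le (c := ⟪f, h⟫ + ‖f‖ * ‖h‖) hu fun n => by
    rw [hpartial]
    linarith [neg_abs_le ⟪f, (A ^ n) h⟫, hbound n]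
  -- Cauchy–Schwarz for `Aⁿ` bounds the remainder by `√(uₙ ‖h‖²)`.
  have htail : Tendsto (fun n => ⟪f, (A ^ n) h⟫) atTop (𝓝 0) := by
    refine squeeze_zero_norm (fun n => Real.abs_le_sqrt ?_)
      (by simpa using (hsum.tendsto_atTop_zero.mul_const (‖h‖ ^ 2)).sqrt)
    have hh : ⟪h, (A ^ n) h⟫ ≤ ‖h‖ ^ 2 := by
      have := (real_inner_le_norm _ _).trans (mul_le_mul_of_nonneg_left
        (norm_pow_apply_le_of_norm_le_one hA₁ n h) (norm_nonneg h))
      rwa [← sq] at this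
    nlinarith [(hA.pow n).real_inner_map_sq_le f h, hu n, (hA.pow n).inner_nonneg_right h]
  rw [hasSum_iff_tendsto_nat_of_nonneg hu]
  simpa [hpartial] using tendsto_const_nhds.sub htail

end Real

end ContinuousLinearMap

theorem IsIdempotentElem.mul_pow_mul_eq {M : Type*} [Monoid M] {e : M} (he : IsIdempotentElem e)
    (b : M) (n : ℕ) : (e * b) ^ n * e = (e * b * e) ^ n * e := by
  induction n with
  | zero => simp
  | succ n ih =>
    calc (e * b) ^ (n + 1) * e = (e * b) ^ n * e * (b * e) := by simp only [pow_succ, mul_assoc]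
      _ = (e * b * e) ^ n * e * (b * e) := by rw [ih]
      _ = (e * b * e) ^ (n + 1) * e := by simp only [pow_succ, mul_assoc, he.eq]

section TwoProjections

open ContinuousLinearMap

variable {H : Type*} [NormedAddCommGroup H] [InnerProductSpace ℝ H] {p q : H →L[ℝ] H}

theorem VR_eq_of_hasSum (r : ℝ) (f : H) {v : ℝ}
    (hv : HasSum (fun t => ⟪f, (((1 - r) • p + r • q) ^ t) f⟫) v) :
    VR p q r f = 2 * v - ‖f‖ ^ 2 := by
  have hv₁ := ((hasSum_nat_add_iff' 1).mpr hv).tsum_eq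
  simp only [range_one, sum_singleton, pow_zero, one_apply_eq_self,
    real_inner_self_eq_norm_sq] at hv₁
  rw [VR, hv₁]
  ring

variable [CompleteSpace H]

theorem VD_eq_of_hasSum (hp : IsStarProjection p) {f : H} (hf : p f = f) {S : ℝ}
    (hS : HasSum (fun s => ⟪f, ((p * q * p) ^ s) f⟫) S) : VD p q f = 4 * S - 2 * ‖f‖ ^ 2 := by
  set a : ℕ → ℝ := fun s => ⟪f, ((p * q * p) ^ s) f⟫
  have h₁ : ∀ s, ⟪f, ((p * q) ^ s * p) f⟫ = a s := fun s => by
    rw [hp.isIdempotentElem.mul_pow_mul_eq, mul_apply_eq_comp, hf]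
  have h₂ : ∀ s, ⟪f, ((p * q) ^ (s + 1)) f⟫ = a (s + 1) := fun s => by
    rw [← h₁, mul_apply_eq_comp, hf]
  have h₃ : ∀ s, ⟪f, ((q * p) ^ s * q) f⟫ = a (s + 1) := fun s => by
    have hsc : SemiconjBy p (q * p) (p * q) := (mul_assoc p q p).symm
    have hsemi : p * ((q * p) ^ s * q) = (p * q) ^ (s + 1) := by
      rw [← mul_assoc, (hsc.pow_right s).eq, mul_assoc, ← pow_succ]
    calc ⟪f, ((q * p) ^ s * q) f⟫ = ⟪p f, ((q * p) ^ s * q) f⟫ := by rw [hf]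
      _ = ⟪f, (p * ((q * p) ^ s * q)) f⟫ := hp.isSelfAdjoint.isSymmetric.apply_clm _ _
      _ = a (s + 1) := by rw [hsemi, h₂]
  have h₄ : ∀ s, ⟪f, ((q * p) ^ (s + 1)) f⟫ = a (s + 1) := fun s => by
    rw [← h₃, pow_succ, mul_apply_eq_comp, mul_apply_eq_comp, hf, mul_apply_eq_comp]
  have hS₁ : HasSum (fun s => a (s + 1)) (S - ‖f‖ ^ 2) := by
    simpa [a, real_inner_self_eq_norm_sq] using (hasSum_nat_add_iff' 1).mpr hS
  rw [VD, tsum_congr h₁, tsum_congr h₂, tsum_congr h₃, tsum_congr h₄, hS.tsum_eq, hS₁.tsum_eq]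
  ring

theorem exists_sub_apply_eq_and_hasSum_inner (hp : IsStarProjection p) (hpq : ‖p * q‖ < 1)
    {f : H} (hf : p f = f) :
    ∃ g, p g = g ∧ g - p (q g) = f ∧ HasSum (fun s => ⟪f, ((p * q * p) ^ s) f⟫) ⟪f, g⟫ := by
  set T := p * q * p
  have hT : ‖T‖ < 1 := calc
    ‖T‖ ≤ ‖p * q‖ * ‖p‖ := norm_mul_le _ _
    _ ≤ ‖p * q‖ * 1 := by gcongr; exact hp.norm_le
    _ < 1 := by rwa [mul_one]
  have hpT : p * T = T := by simp only [T, ← mul_assoc, hp.isIdempotentElem.eq]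
  set g := (∑' n, T ^ n) f
  have hgf : g - T g = f := by
    simpa only [mul_apply_eq_comp, sub_apply, one_apply_eq_self] using
      congr($(mul_neg_geom_series T hT) f)
  have hg : f + T g = g := eq_sub_iff_add_eq.mp hgf.symm
  have hpg : p g = g := by
    rw [← hg, map_add, hf, ← mul_apply_eq_comp p T, hpT]
  refine ⟨g, hpg, ?_, ?_⟩
  · rwa [show T g = p (q g) by simp only [T, mul_apply_eq_comp, hpg]] at hgf
  · exact (summable_geometric_of_norm_lt_one hT).hasSum.mapL
      ((innerSL ℝ f).comp (ContinuousLinearMap.apply ℝ H f))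

theorem hasSum_inner_randomScan_pow (hp : IsStarProjection p) (hq : IsStarProjection q)
    {f g : H} (hg : p g = g) (hgf : g - p (q g) = f) {r : ℝ} (hr : r ∈ Set.Ioo 0 1) :
    HasSum (fun t => ⟪f, (((1 - r) • p + r • q) ^ t) f⟫)
      (⟪f, g⟫ / r + (⟪f, g⟫ - ‖f‖ ^ 2) / (1 - r)) := by
  obtain ⟨hr₀, hr₁⟩ := hr
  set A := (1 - r) • p + r • q
  have hApos : A.IsPositive :=
    ((IsPositive.of_isStarProjection hp).smul_of_nonneg (sub_nonneg.mpr hr₁.le)).add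
      ((IsPositive.of_isStarProjection hq).smul_of_nonneg hr₀.le)
  have hA₁ : ‖A‖ ≤ 1 := calc
    ‖A‖ ≤ (1 - r) * ‖p‖ + r * ‖q‖ := (norm_add_le _ _).trans_eq <| by
      rw [norm_smul, norm_smul, Real.norm_of_nonneg (sub_nonneg.mpr hr₁.le),
        Real.norm_of_nonneg hr₀.le]
    _ ≤ (1 - r) * 1 + r * 1 :=
      add_le_add (mul_le_mul_of_nonneg_left hp.norm_le (sub_nonneg.mpr hr₁.le))
        (mul_le_mul_of_nonneg_left hq.norm_le hr₀.le)
    _ = 1 := by ring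
  have hpqg : p (q g) = g - f := by rw [← hgf, sub_sub_cancel]
  have hf : p f = f := by
    rw [← hgf, map_sub, hg, ← mul_apply_eq_comp p p, hp.isIdempotentElem.eq]
  -- ansatz `h ∈ span {g, q g}`, using `p (q g) = g - f`
  set h := r⁻¹ • g + (1 - r)⁻¹ • q g
  have hfh : h - A h = f := by
    have hqq : q (q g) = q g := by rw [← mul_apply_eq_comp, hq.isIdempotentElem.eq]
    simp only [A, h, add_apply, smul_apply, map_add, map_smul, hg, hpqg, hqq]
    match_scalars <;> field_simp <;> ring
  have hfqg : ⟪f, q g⟫ = ⟪f, g⟫ - ‖f‖ ^ 2 := calc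
    ⟪f, q g⟫ = ⟪p f, q g⟫ := by rw [hf]
    _ = ⟪f, p (q g)⟫ := hp.isSelfAdjoint.isSymmetric.apply_clm _ _
    _ = ⟪f, g⟫ - ‖f‖ ^ 2 := by rw [hpqg, inner_sub_right, real_inner_self_eq_norm_sq]
  have hfh' : ⟪f, h⟫ = ⟪f, g⟫ / r + (⟪f, g⟫ - ‖f‖ ^ 2) / (1 - r) := by
    rw [inner_add_right, real_inner_smul_right, real_inner_smul_right, hfqg]
    ring
  exact hfh' ▸ hApos.hasSum_inner_pow hA₁ hfh

end TwoProjections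

section VarianceBounds

variable {r : ℝ}

theorem four_mul_sub_le_max_mul (hr : r ∈ Set.Ioo 0 1) {X S : ℝ} (hX : 0 ≤ X) (hXS : X ≤ S) :
    4 * S - 2 * X ≤
      max (2 * r / (2 - r)) (2 * r * (1 - r)) * (2 * (S / r + (S - X) / (1 - r)) - X) := by
  obtain ⟨hr₀, hr₁⟩ := hr
  have h2r : 0 < 2 - r := by linarith
  have h1r : 0 < 1 - r := by linarith
  set M := max (2 * r / (2 - r)) (2 * r * (1 - r))
  calc 4 * S - 2 * X
      = 2 * r / (2 - r) * ((2 - r) / r * X) + 2 * r * (1 - r) * (2 / (r * (1 - r)) * (S - X)) := by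
        field_simp
        ring
    _ ≤ M * ((2 - r) / r * X) + M * (2 / (r * (1 - r)) * (S - X)) := by
        gcongr
        exacts [le_max_left _ _, le_max_right _ _]
    _ = M * (2 * (S / r + (S - X) / (1 - r)) - X) := by
        field_simp
        ring

theorem one_add_div_two_mul_le_div_mul (hr : r ∈ Set.Ioo 0 1) {X S τ : ℝ} (hX : 0 ≤ X)
    (hXS : X ≤ S) (hτ : 0 < τ) :
    (1 + τ) / 2 * (4 * S - 2 * X) ≤
      (τ + 1) / τ * ((r * τ + 1 - r) * (2 * (S / r + (S - X) / (1 - r)) - X)) := by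
  have hD := four_mul_sub_le_max_mul hr hX hXS
  obtain ⟨hr₀, hr₁⟩ := hr
  set V := 2 * (S / r + (S - X) / (1 - r)) - X
  have hV : 0 ≤ V := by
    have h₁ : X ≤ S / r := by rw [le_div_iff₀ hr₀]; nlinarith
    have h₂ : 0 ≤ (S - X) / (1 - r) := div_nonneg (by linarith) (by linarith)
    linarith
  have hM : max (2 * r / (2 - r)) (2 * r * (1 - r)) ≤ 2 * r :=
    max_le (by rw [div_le_iff₀ (by linarith)]; nlinarith) (by nlinarith)
  have hcoef : (1 + τ) / 2 * (2 * r) ≤ (τ + 1) / τ * (r * τ + 1 - r) := by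
    rw [div_mul_eq_mul_div _ τ, le_div_iff₀ hτ]
    nlinarith
  calc (1 + τ) / 2 * (4 * S - 2 * X) ≤ (1 + τ) / 2 * (2 * r * V) := by
        gcongr
        exact hD.trans (mul_le_mul_of_nonneg_right hM hV)
    _ = (1 + τ) / 2 * (2 * r) * V := by ring
    _ ≤ (τ + 1) / τ * (r * τ + 1 - r) * V := by gcongr
    _ = (τ + 1) / τ * ((r * τ + 1 - r) * V) := by ring

end VarianceBounds

theorem stmt17 {H : Type*} [NormedAddCommGroup H] [InnerProductSpace ℝ H] [CompleteSpace H]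
    (P₁ P₂ : H →L[ℝ] H)
    (h1sa : IsSelfAdjoint P₁) (h1idem : P₁ * P₁ = P₁)
    (h2sa : IsSelfAdjoint P₂) (h2idem : P₂ * P₂ = P₂)
    (hnorm : ‖P₁ * P₂‖ < 1)
    (f : H) (hf : P₁ f = f)
    (r : ℝ) (hr : r ∈ Set.Ioo (0 : ℝ) 1) :
    VD P₁ P₂ f ≤ max (2 * r / (2 - r)) (2 * r * (1 - r)) * VR P₁ P₂ r f ∧
    (∀ τ : ℝ, 0 < τ → VDdag P₁ P₂ τ f ≤ ((τ + 1) / τ) * VRdag P₁ P₂ r τ f) := by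
  have hp : IsStarProjection P₁ := ⟨h1idem, h1sa⟩
  have hq : IsStarProjection P₂ := ⟨h2idem, h2sa⟩
  obtain ⟨g, hg, hgf, hS⟩ := exists_sub_apply_eq_and_hasSum_inner hp hnorm hf
  have hXS : ‖f‖ ^ 2 ≤ ⟪f, g⟫ := by
    have hpos := (ContinuousLinearMap.IsPositive.of_isStarProjection hq).conj_isSelfAdjoint h1sa
    simpa [real_inner_self_eq_norm_sq] using
      le_hasSum hS 0 fun s _ => (hpos.pow s).inner_nonneg_right f
  have hVD := VD_eq_of_hasSum hp hf hS
  have hVR := VR_eq_of_hasSum r f (hasSum_inner_randomScan_pow hp hq hg hgf hr)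
  refine ⟨?_, fun τ hτ => ?_⟩
  · rw [hVD, hVR]
    exact four_mul_sub_le_max_mul hr (sq_nonneg _) hXS
  · rw [VDdag, VRdag, hVD, hVR]
    exact one_add_div_two_mul_le_div_mul hr (sq_nonneg _) hXS hτ
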